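/- arXiv:2009.14748 — 5 statements merged into one kernel-verified Lean document; each statement's English description precedes it below -/
import Mathlib

section
/- If a differentiable function S : ℝ → ℝ satisfies S'(t) = -k · S(t)^(n/m) for all t ≥ 0, where k > 0 and m, n are odd coprime integers with 0 < n < m (so x ↦ x^(n/m) is the odd real root power), then S(t) = 0 for all t ≥ (m/(k(m-n))) · S(0)^((m-n)/m) when S(0) ≥ 0. In particular S reaches zero in finite time. -/
/-!
While `S > 0` the equation `S' = -k S^q` (with `q < 1`) says that `S^(1-q)` decreases linearly with
slope `-(1-q) k`, so `S` must vanish by time `S(0)^(1-q) / ((1-q) k)`. Once it has vanished it stays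
zero, because `S · S' = -k · S · oddPow S q ≤ 0` makes `S²` nonincreasing.
-/

/-- Sign-preserving odd real-root power: `oddPow x q = sign x * |x| ^ q`. -/
noncomputable def oddPow (x q : ℝ) : ℝ := Real.sign x * |x| ^ q

open Set

lemma oddPow_of_pos {x : ℝ} (hx : 0 < x) (q : ℝ) : oddPow x q = x ^ q := by
  rw [oddPow, Real.sign_of_pos hx, one_mul, abs_of_pos hx]

lemma mul_oddPow_nonneg (x q : ℝ) : 0 ≤ x * oddPow x q := by
  rw [oddPow, ← mul_assoc, mul_comm x]
  exact mul_nonneg (Real.sign_mul_nonneg x) (Real.rpow_nonneg (abs_nonneg x) q)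

lemma antitoneOn_sq_of_mul_deriv_nonpos {S : ℝ → ℝ} {a : ℝ} (hS : Differentiable ℝ S)
    (h : ∀ s, a ≤ s → S s * deriv S s ≤ 0) : AntitoneOn (fun s => S s ^ 2) (Ici a) := by
  refine antitoneOn_of_deriv_nonpos (convex_Ici a) (hS.pow 2).continuous.continuousOn
    (hS.pow 2).differentiableOn fun s hs => ?_
  rw [interior_Ici] at hs
  rw [((hS s).hasDerivAt.fun_pow 2).deriv]
  norm_num
  nlinarith [h s hs.le]

lemma eq_zero_of_mul_deriv_nonpos_of_eq_zero {S : ℝ → ℝ} {a t₀ t : ℝ} (hS : Differentiable ℝ S)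
    (h : ∀ s, a ≤ s → S s * deriv S s ≤ 0) (ha : a ≤ t₀) (h₀ : S t₀ = 0) (ht : t₀ ≤ t) :
    S t = 0 := by
  have hsq := antitoneOn_sq_of_mul_deriv_nonpos hS h (mem_Ici.2 ha) (mem_Ici.2 (ha.trans ht)) ht
  simp only [h₀] at hsq
  nlinarith [sq_nonneg (S t)]

lemma rpow_one_sub_eq_of_deriv_eq_neg_mul_rpow {S : ℝ → ℝ} {k q a b : ℝ} (hab : a ≤ b)
    (hS : Differentiable ℝ S) (hpos : ∀ s ∈ Icc a b, 0 < S s)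
    (hode : ∀ s ∈ Icc a b, deriv S s = -k * S s ^ q) :
    S b ^ (1 - q) = S a ^ (1 - q) - (1 - q) * k * (b - a) := by
  have hderiv : ∀ s ∈ Icc a b, HasDerivAt (fun u => S u ^ (1 - q)) (-((1 - q) * k)) s := by
    intro s hs
    convert (hS s).hasDerivAt.rpow_const (p := 1 - q) (Or.inl (hpos s hs).ne') using 1
    have hcancel : S s ^ q * S s ^ (1 - q - 1) = 1 := by
      rw [sub_sub_cancel_left, Real.rpow_neg (hpos s hs).le, mul_inv_cancel₀]
      exact (Real.rpow_pos_of_pos (hpos s hs) q).ne'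
    rw [hode s hs]
    linear_combination (1 - q) * k * hcancel
  have hline : ∀ s, HasDerivAt (fun u => S a ^ (1 - q) - (1 - q) * k * (u - a)) (-((1 - q) * k)) s :=
    fun s => by simpa using ((hasDerivAt_id s).sub_const a).const_mul ((1 - q) * k) |>.const_sub _
  refine eq_of_has_deriv_right_eq (fun s hs => (hderiv s (Ico_subset_Icc_self hs)).hasDerivWithinAt)
    (fun s _ => (hline s).hasDerivWithinAt)
    (fun s hs => (hderiv s hs).continuousAt.continuousWithinAt)
    (fun s _ => (hline s).continuousAt.continuousWithinAt) (by ring) b (right_mem_Icc.2 hab)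

lemma exists_eq_zero_of_deriv_eq_neg_mul_oddPow {S : ℝ → ℝ} {k q a : ℝ} (hk : 0 < k) (hq : q < 1)
    (hS : Differentiable ℝ S) (hode : ∀ s, a ≤ s → deriv S s = -k * oddPow (S s) q)
    (ha : 0 ≤ S a) : ∃ t₀ ∈ Icc a (a + S a ^ (1 - q) / ((1 - q) * k)), S t₀ = 0 := by
  set b := a + S a ^ (1 - q) / ((1 - q) * k)
  have hab : a ≤ b := le_add_of_nonneg_right (by have := Real.rpow_nonneg ha (1 - q); positivity)
  by_contra! hne
  have hpos : ∀ s ∈ Icc a b, 0 < S s := by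
    intro s hs
    by_contra! hs₀
    obtain ⟨u, hu, hSu⟩ := intermediate_value_Icc' hs.1 hS.continuous.continuousOn ⟨hs₀, ha⟩
    exact hne u ⟨hu.1, hu.2.trans hs.2⟩ hSu
  have hsol := rpow_one_sub_eq_of_deriv_eq_neg_mul_rpow hab hS hpos fun s hs => by
    rw [hode s hs.1, oddPow_of_pos (hpos s hs)]
  have hb : S a ^ (1 - q) - (1 - q) * k * (b - a) = 0 := by
    simp only [b]
    field_simp [(sub_pos.2 hq).ne', hk.ne']
    ring
  have := Real.rpow_pos_of_pos (hpos b (right_mem_Icc.2 hab)) (1 - q)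
  linarith

theorem finite_time_convergence_general
    (S : ℝ → ℝ) (k : ℝ) (m n : ℤ)
    (hk : 0 < k)
    (hn : 0 < n) (hnm : n < m)
    (hdiff : Differentiable ℝ S)
    (hode : ∀ t : ℝ, 0 ≤ t → deriv S t = -k * oddPow (S t) ((n : ℝ) / (m : ℝ)))
    (hS0 : 0 ≤ S 0) :
    ∀ t : ℝ, ((m : ℝ) / (k * ((m : ℝ) - (n : ℝ)))) * (S 0) ^ (((m : ℝ) - (n : ℝ)) / (m : ℝ)) ≤ t →
      S t = 0 := by
  intro t ht
  have hm : (0 : ℝ) < m := by exact_mod_cast hn.trans hnm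
  have hq : (n : ℝ) / m < 1 := (div_lt_one hm).2 (by exact_mod_cast hnm)
  have hexp : ((m : ℝ) - n) / m = 1 - n / m := by field_simp
  have hT : (m : ℝ) / (k * (m - n)) * S 0 ^ (1 - n / m : ℝ)
      = 0 + S 0 ^ (1 - n / m : ℝ) / ((1 - n / m) * k) := by
    have : (m : ℝ) - n ≠ 0 := sub_ne_zero.2 (by exact_mod_cast hnm.ne')
    field_simp
    ring
  rw [hexp, hT] at ht
  obtain ⟨t₀, ht₀, hSt₀⟩ := exists_eq_zero_of_deriv_eq_neg_mul_oddPow hk hq hdiff hode hS0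
  refine eq_zero_of_mul_deriv_nonpos_of_eq_zero hdiff (fun s hs => ?_) ht₀.1 hSt₀ (ht₀.2.trans ht)
  rw [hode s hs]
  nlinarith [mul_oddPow_nonneg (S s) ((n : ℝ) / m)]

theorem finite_time_convergence
    (S : ℝ → ℝ) (k : ℝ) (m n : ℤ)
    (hk : 0 < k) (hmodd : Odd m) (hnodd : Odd n) (hcop : IsCoprime m n)
    (hn : 0 < n) (hnm : n < m)
    (hdiff : Differentiable ℝ S)
    (hode : ∀ t : ℝ, 0 ≤ t → deriv S t = -k * oddPow (S t) ((n : ℝ) / (m : ℝ)))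
    (hS0 : 0 ≤ S 0) :
    ∀ t : ℝ, ((m : ℝ) / (k * ((m : ℝ) - (n : ℝ)))) * (S 0) ^ (((m : ℝ) - (n : ℝ)) / (m : ℝ)) ≤ t →
      S t = 0 :=
  finite_time_convergence_general S k m n hk hn hnm hdiff hode hS0
end

section
/- Let A be the product of the unit lower-triangular matrix L with rows (1,0,0), (tan θ_des, 1, 0), (0,0,1) and the matrix A_p from the guidance law. Then |det A| = V_p² |cos γ|, so A is invertible iff V_p ≠ 0 and cos γ ≠ 0. -/
open Matrix

/-- The shape of `A_p`, with `(a, b) = (cos, sin) (α_p - ψ)` and `(c, d) = (cos, sin) γ`. -/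
theorem det_guidance_matrix_of_sq_add_sq {R : Type*} [CommRing R] (V a b c d : R)
    (hab : a ^ 2 + b ^ 2 = 1) (hcd : c ^ 2 + d ^ 2 = 1) :
    !![-(a * c), V * b * c, V * a * d;
       -d, 0, -(V * c);
       -(b * c), -(V * a * c), V * b * d].det = V ^ 2 * c := by
  rw [det_fin_three]
  simp only [of_apply, cons_val', cons_val_zero, cons_val_one, cons_val, cons_val_fin_one]
  linear_combination V ^ 2 * c * ((a ^ 2 + b ^ 2) * hcd + hab)

theorem det_unitLowerTriangular_fin_three_mul {R : Type*} [CommRing R] (t : R)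
    (M : Matrix (Fin 3) (Fin 3) R) : (!![1, 0, 0; t, 1, 0; 0, 0, 1] * M).det = M.det := by
  rw [det_mul, det_fin_three]
  simp

theorem guidance_matrix_A_det_general
    (Vp αp γ ψ θdes : ℝ) :
    let Ap : Matrix (Fin 3) (Fin 3) ℝ :=
      !![-(Real.cos (αp - ψ) * Real.cos γ), Vp * Real.sin (αp - ψ) * Real.cos γ,
          Vp * Real.cos (αp - ψ) * Real.sin γ;
         -(Real.sin γ), 0, -(Vp * Real.cos γ);
         -(Real.sin (αp - ψ) * Real.cos γ), -(Vp * Real.cos (αp - ψ) * Real.cos γ),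
          Vp * Real.sin (αp - ψ) * Real.sin γ]
    let L : Matrix (Fin 3) (Fin 3) ℝ := !![1, 0, 0; Real.tan θdes, 1, 0; 0, 0, 1]
    let A : Matrix (Fin 3) (Fin 3) ℝ := L * Ap
    |A.det| = Vp ^ 2 * |Real.cos γ| ∧ (IsUnit A.det ↔ (Vp ≠ 0 ∧ Real.cos γ ≠ 0)) := by
  intro Ap L A
  have hA : A.det = Vp ^ 2 * Real.cos γ := by
    rw [det_unitLowerTriangular_fin_three_mul]
    exact det_guidance_matrix_of_sq_add_sq _ _ _ _ _
      (Real.cos_sq_add_sin_sq _) (Real.cos_sq_add_sin_sq _)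
  rw [hA, abs_mul, abs_sq, isUnit_iff_ne_zero, mul_ne_zero_iff, pow_ne_zero_iff two_ne_zero]
  exact ⟨rfl, Iff.rfl⟩

theorem guidance_matrix_A_det
    (Vp αp γ ψ θdes : ℝ) (hθ : θdes ∈ Set.Ioo (-(Real.pi / 2)) (Real.pi / 2)) :
    let Ap : Matrix (Fin 3) (Fin 3) ℝ :=
      !![-(Real.cos (αp - ψ) * Real.cos γ), Vp * Real.sin (αp - ψ) * Real.cos γ,
          Vp * Real.cos (αp - ψ) * Real.sin γ;
         -(Real.sin γ), 0, -(Vp * Real.cos γ);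
         -(Real.sin (αp - ψ) * Real.cos γ), -(Vp * Real.cos (αp - ψ) * Real.cos γ),
          Vp * Real.sin (αp - ψ) * Real.sin γ]
    let L : Matrix (Fin 3) (Fin 3) ℝ := !![1, 0, 0; Real.tan θdes, 1, 0; 0, 0, 1]
    let A : Matrix (Fin 3) (Fin 3) ℝ := L * Ap
    |A.det| = Vp ^ 2 * |Real.cos γ| ∧ (IsUnit A.det ↔ (Vp ≠ 0 ∧ Real.cos γ ≠ 0)) :=
  guidance_matrix_A_det_general Vp αp γ ψ θdes
end

section
/- Let k_a, k_b ∈ ℝ with k_b > k_a, and θ_des ∈ (-π/2, π/2). Suppose θ : [0,∞) → (-π/2, π/2) is differentiable and satisfies θ'(t) = (k_b - k_a) cos²(θ(t)) (tan(θ_des) - tan(θ(t))). Then with V(t) = ½ (θ(t) - θ_des)², V is non-increasing; moreover V'(t) ≤ 0 with equality only when θ(t) = θ_des, and θ(t) → θ_des as t → ∞. -/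
/-!
Along the guidance law, `V' = -(kb - ka) cos² θ (θ - θdes) (tan θ - tan θdes)` is `≤ 0`
because `tan` is increasing, and vanishes only at `θ = θdes`. Since `V` is antitone, `θ` cannot
cross `θdes` without staying there, so it is confined to the segment between `θ 0` and `θdes`,
a compact subset of `(-π/2, π/2)`. There the dissipation is bounded below by a positive constant
outside any neighbourhood of `θdes`, so `V ≥ 0` forces `θ` to enter, and then stay in, every
such neighbourhood.
-/

open Filter

open Set Real

theorem StrictMonoOn.sub_mul_sub_pos {s : Set ℝ} {f : ℝ → ℝ} (hf : StrictMonoOn f s)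
    {x y : ℝ} (hx : x ∈ s) (hy : y ∈ s) (hxy : x ≠ y) : 0 < (x - y) * (f x - f y) := by
  rcases hxy.lt_or_gt with h | h
  · exact mul_pos_of_neg_of_neg (sub_neg.2 h) (sub_neg.2 (hf hx hy h))
  · exact mul_pos (sub_pos.2 h) (sub_pos.2 (hf hy hx h))

theorem hasDerivAt_half_sq_sub {θ : ℝ → ℝ} {θ' t : ℝ} (hθ : HasDerivAt θ θ' t) (a : ℝ) :
    HasDerivAt (fun s => 1 / 2 * (θ s - a) ^ 2) ((θ t - a) * θ') t :=
  (((hθ.sub_const a).fun_pow 2).const_mul (1 / 2 : ℝ)).congr_deriv (by push_cast; ring)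

/-- Crossing `a` would make the antitone quantity `(θ - a)² / 2` vanish from then on. -/
theorem mem_uIcc_of_antitoneOn_half_sq {θ : ℝ → ℝ} {a : ℝ} (hθ : Continuous θ)
    (hanti : AntitoneOn (fun t => 1 / 2 * (θ t - a) ^ 2) (Ici 0)) {t : ℝ} (ht : 0 ≤ t) :
    θ t ∈ uIcc (θ 0) a := by
  have hle : (θ t - a) ^ 2 ≤ (θ 0 - a) ^ 2 := by
    have := hanti self_mem_Ici ht ht
    dsimp only at this
    linarith
  by_cases hcross : a ∈ uIcc (θ 0) (θ t)
  · have hhit := intermediate_value_uIcc hθ.continuousOn hcross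
    rw [uIcc_of_le ht] at hhit
    obtain ⟨s, ⟨hs0, hst⟩, hsa⟩ := hhit
    have hts := hanti hs0 ht hst
    dsimp only at hts
    rw [hsa, sub_self] at hts
    rw [show θ t = a by nlinarith [sq_nonneg (θ t - a)]]
    exact right_mem_uIcc
  · rw [mem_uIcc] at hcross ⊢
    push Not at hcross
    rcases le_total (θ 0) a with h | h
    · have hta := hcross.1 h
      exact Or.inl ⟨by nlinarith, hta.le⟩
    · have hat : a < θ t := not_le.1 fun hta => (hcross.2 hta).not_ge h
      exact Or.inr ⟨hat.le, by nlinarith⟩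

/-- LaSalle-type argument: if `θ` stayed `ε`-far from `a`, then `g ∘ θ` would be bounded below
by its positive minimum on the compact `S ∩ {x | ε ≤ |x - a|}`, and `(θ - a)² / 2` would
decrease linearly below `0`. -/
theorem tendsto_of_antitoneOn_half_sq {θ g : ℝ → ℝ} {a : ℝ} {S : Set ℝ} (hS : IsCompact S)
    (hg : ContinuousOn g S) (hg_pos : ∀ x ∈ S, x ≠ a → 0 < g x) (hθ : Differentiable ℝ θ)
    (hθS : ∀ t, 0 ≤ t → θ t ∈ S)
    (hanti : AntitoneOn (fun t => 1 / 2 * (θ t - a) ^ 2) (Ici 0))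
    (hV : ∀ t, 0 ≤ t → deriv (fun s => 1 / 2 * (θ s - a) ^ 2) t ≤ -g (θ t)) :
    Tendsto θ atTop (nhds a) := by
  set V := fun t => 1 / 2 * (θ t - a) ^ 2 with hVdef
  rw [Metric.tendsto_atTop]
  intro ε hε
  by_contra! hfar
  have hfar' : ∀ t, 0 ≤ t → ε ≤ |θ t - a| := by
    intro t ht
    obtain ⟨t', htt', hε'⟩ := hfar t
    have := hanti ht (ht.trans htt') htt'
    simp only [hVdef] at this
    rw [Real.dist_eq] at hε'
    exact hε'.trans (sq_le_sq.1 (by linarith))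
  set S' := S ∩ {x | ε ≤ |x - a|}
  have hS' : IsCompact S' :=
    hS.inter_right (isClosed_le continuous_const (continuous_abs.comp (continuous_sub_right a)))
  obtain ⟨x₀, hx₀, hmin⟩ :=
    hS'.exists_isMinOn ⟨θ 0, hθS 0 le_rfl, hfar' 0 le_rfl⟩ (hg.mono inter_subset_left)
  have hm : 0 < g x₀ := hg_pos x₀ hx₀.1 fun h => hε.not_ge (by simpa [h] using hx₀.2)
  have hVdiff : Differentiable ℝ V :=
    fun t => (hasDerivAt_half_sq_sub (hθ t).hasDerivAt a).differentiableAt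
  have hdecay : ∀ t, 0 ≤ t → V t - V 0 ≤ -g x₀ * (t - 0) := by
    intro t ht
    refine (convex_Ici 0).image_sub_le_mul_sub_of_deriv_le hVdiff.continuous.continuousOn
      hVdiff.differentiableOn (fun s hs => ?_) 0 self_mem_Ici t ht ht
    rw [interior_Ici] at hs
    exact (hV s hs.le).trans (neg_le_neg (hmin ⟨hθS s hs.le, hfar' s hs.le⟩))
  set T := V 0 / g x₀ + 1
  have hdrop : g x₀ * T = V 0 + g x₀ := by rw [mul_add, mul_div_cancel₀ _ hm.ne', mul_one]
  have hVT : 0 ≤ V T := by positivity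
  have := hdecay T (by positivity)
  rw [sub_zero, neg_mul, hdrop] at this
  linarith

/-- `-dV/dt` for `V = (θ - a)² / 2` along the guidance law with gain `c`, at elevation `x`. -/
noncomputable def dissipation (c a x : ℝ) : ℝ := c * cos x ^ 2 * ((x - a) * (tan x - tan a))

theorem continuousOn_dissipation (c a : ℝ) :
    ContinuousOn (dissipation c a) (Ioo (-(π / 2)) (π / 2)) :=
  (continuous_const.mul (continuous_cos.pow 2)).continuousOn.mul
    ((continuousOn_id.sub continuousOn_const).mul (continuousOn_tan_Ioo.sub continuousOn_const))

theorem dissipation_pos {c a x : ℝ} (hc : 0 < c) (hx : x ∈ Ioo (-(π / 2)) (π / 2))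
    (ha : a ∈ Ioo (-(π / 2)) (π / 2)) (hxa : x ≠ a) : 0 < dissipation c a x :=
  mul_pos (mul_pos hc (pow_pos (cos_pos_of_mem_Ioo hx) 2))
    (strictMonoOn_tan.sub_mul_sub_pos hx ha hxa)

theorem dissipation_nonneg {c a x : ℝ} (hc : 0 < c) (hx : x ∈ Ioo (-(π / 2)) (π / 2))
    (ha : a ∈ Ioo (-(π / 2)) (π / 2)) : 0 ≤ dissipation c a x := by
  rcases eq_or_ne x a with rfl | hxa
  · simp [dissipation]
  · exact (dissipation_pos hc hx ha hxa).le

theorem eq_of_dissipation_eq_zero {c a x : ℝ} (hc : 0 < c) (hx : x ∈ Ioo (-(π / 2)) (π / 2))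
    (ha : a ∈ Ioo (-(π / 2)) (π / 2)) (h : dissipation c a x = 0) : x = a :=
  by_contra fun hxa => (dissipation_pos hc hx ha hxa).ne' h

theorem elevation_angle_lyapunov
    (ka kb θdes : ℝ) (hab : ka < kb)
    (hθdes : θdes ∈ Set.Ioo (-(Real.pi / 2)) (Real.pi / 2))
    (θ : ℝ → ℝ)
    (hrange : ∀ t : ℝ, 0 ≤ t → θ t ∈ Set.Ioo (-(Real.pi / 2)) (Real.pi / 2))
    (hdiff : Differentiable ℝ θ)
    (hode : ∀ t : ℝ, 0 ≤ t →
      deriv θ t = (kb - ka) * Real.cos (θ t) ^ 2 * (Real.tan θdes - Real.tan (θ t))) :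
    (AntitoneOn (fun t => (1 / 2) * (θ t - θdes) ^ 2) (Set.Ici (0 : ℝ))) ∧
    (∀ t : ℝ, 0 ≤ t →
      deriv (fun s => (1 / 2) * (θ s - θdes) ^ 2) t ≤ 0 ∧
      (deriv (fun s => (1 / 2) * (θ s - θdes) ^ 2) t = 0 → θ t = θdes)) ∧
    Tendsto θ atTop (nhds θdes) := by
  have hc : 0 < kb - ka := sub_pos.2 hab
  have hV : ∀ t, HasDerivAt (fun s => (1 / 2) * (θ s - θdes) ^ 2) ((θ t - θdes) * deriv θ t) t :=
    fun t => hasDerivAt_half_sq_sub (hdiff t).hasDerivAt θdes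
  have hVderiv : ∀ t, 0 ≤ t →
      deriv (fun s => (1 / 2) * (θ s - θdes) ^ 2) t = -dissipation (kb - ka) θdes (θ t) := by
    intro t ht
    rw [(hV t).deriv, hode t ht, dissipation]
    ring
  have hdecr : ∀ t : ℝ, 0 ≤ t →
      deriv (fun s => (1 / 2) * (θ s - θdes) ^ 2) t ≤ 0 ∧
      (deriv (fun s => (1 / 2) * (θ s - θdes) ^ 2) t = 0 → θ t = θdes) := by
    intro t ht
    rw [hVderiv t ht, neg_nonpos, neg_eq_zero]
    exact ⟨dissipation_nonneg hc (hrange t ht) hθdes,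
      eq_of_dissipation_eq_zero hc (hrange t ht) hθdes⟩
  have hanti : AntitoneOn (fun t => (1 / 2) * (θ t - θdes) ^ 2) (Ici 0) := by
    have hVdiff : Differentiable ℝ fun t => (1 / 2) * (θ t - θdes) ^ 2 :=
      fun t => (hV t).differentiableAt
    refine antitoneOn_of_deriv_nonpos (convex_Ici 0) hVdiff.continuous.continuousOn
      hVdiff.differentiableOn fun t ht => ?_
    rw [interior_Ici] at ht
    exact (hdecr t ht.le).1
  have hS : uIcc (θ 0) θdes ⊆ Ioo (-(π / 2)) (π / 2) :=
    ordConnected_Ioo.uIcc_subset (hrange 0 le_rfl) hθdes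
  refine ⟨hanti, hdecr, tendsto_of_antitoneOn_half_sq isCompact_uIcc
    ((continuousOn_dissipation _ _).mono hS) (fun x hx hne => dissipation_pos hc (hS hx) hθdes hne)
    hdiff (fun t ht => mem_uIcc_of_antitoneOn_half_sq hdiff.continuous hanti ht) hanti
    fun t ht => (hVderiv t ht).le⟩
end

section
/- Let k_a, k₁ > 0 and let R_xy : [0,∞) → (0,∞) be twice differentiable satisfying R̈_xy(t) = -k_a Ṙ_xy(t) - k₁ · S₁(t)^(n/m), where S₁(t) = Ṙ_xy(t) + k_a R_xy(t), m > n > 0 are odd coprime integers, and x^(n/m) denotes the odd real-root power (sign-preserving). If Ṙ_xy(0) < 0 and S₁(0) < 0 (i.e., |Ṙ_xy(0)| > k_a R_xy(0)), and S₁ satisfies S₁'(t) = -k₁ S₁(t)^(n/m) (so S₁ < 0 and S₁' > 0 during the reaching phase), then |Ṙ_xy(t)| ≤ |Ṙ_xy(0)| for all t during the reaching phase, and hence |Ṙ_xy(t)| ≤ |Ṙ_xy(0)| + k_a R_xy(0). -/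
open Set

lemma antitoneOn_sq_of_mul_deriv_nonpos_s9 {f : ℝ → ℝ} {D : Set ℝ} (hD : Convex ℝ D)
    (hf : ContinuousOn f D) (hf' : DifferentiableOn ℝ f (interior D))
    (h : ∀ x ∈ interior D, f x * deriv f x ≤ 0) : AntitoneOn (fun x => f x ^ 2) D := by
  refine antitoneOn_of_deriv_nonpos hD (hf.pow 2) (hf'.pow 2) fun x hx => ?_
  have hfx : DifferentiableAt ℝ f x := hf'.differentiableAt (isOpen_interior.mem_nhds hx)
  rw [deriv_fun_pow hfx]
  push_cast
  nlinarith [h x hx]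

lemma neg_of_antitoneOn_sq {f : ℝ → ℝ} {a b : ℝ} (hf : ContinuousOn f (Icc a b))
    (hsq : AntitoneOn (fun x => f x ^ 2) (Icc a b)) (hb : f b < 0) {x : ℝ} (hx : x ∈ Icc a b) :
    f x < 0 := by
  by_contra! hfx
  obtain ⟨u, hu, hfu⟩ : ∃ u ∈ Icc x b, f u = 0 :=
    intermediate_value_Icc' hx.2 (hf.mono (Icc_subset_Icc_left hx.1)) ⟨hb.le, hfx⟩
  have hub : f b ^ 2 ≤ f u ^ 2 :=
    hsq ⟨hx.1.trans hu.1, hu.2⟩ ⟨hx.1.trans hx.2, le_rfl⟩ hu.2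
  rw [hfu] at hub
  nlinarith

theorem reaching_phase_speed_bound_case1a_general
    (ka k1 : ℝ) (m n : ℤ) (hka : 0 < ka) (hk1 : 0 < k1)
    (Rxy : ℝ → ℝ) (hpos : ∀ t : ℝ, 0 < Rxy t)
    (hdiff : Differentiable ℝ Rxy) (hdiff2 : Differentiable ℝ (deriv Rxy))
    (hode : ∀ t : ℝ, 0 ≤ t →
      deriv (deriv Rxy) t
        = -ka * deriv Rxy t - k1 * oddPow (deriv Rxy t + ka * Rxy t) ((n : ℝ) / (m : ℝ)))
    (hS1ode : ∀ t : ℝ, 0 ≤ t →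
      deriv (fun s => deriv Rxy s + ka * Rxy s) t
        = -k1 * oddPow (deriv Rxy t + ka * Rxy t) ((n : ℝ) / (m : ℝ))) :
    ∀ t : ℝ, 0 ≤ t → deriv Rxy t + ka * Rxy t < 0 →
      |deriv Rxy t| ≤ |deriv Rxy 0| ∧
      |deriv Rxy t| ≤ |deriv Rxy 0| + ka * Rxy 0 := by
  intro t ht hSt
  set q : ℝ := (n : ℝ) / (m : ℝ)
  set S : ℝ → ℝ := fun s => deriv Rxy s + ka * Rxy s
  have hS : Differentiable ℝ S := hdiff2.add (hdiff.const_mul ka)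
  have hS_sq : AntitoneOn (fun s => S s ^ 2) (Ici 0) :=
    antitoneOn_sq_of_mul_deriv_nonpos_s9 (convex_Ici 0) hS.continuous.continuousOn
      hS.differentiableOn fun s hs => by
        rw [interior_Ici] at hs
        rw [hS1ode s hs.le]
        nlinarith [mul_oddPow_nonneg (S s) q]
  have hS_neg : ∀ s ∈ Icc 0 t, S s < 0 := fun s hs =>
    neg_of_antitoneOn_sq hS.continuous.continuousOn (hS_sq.mono Icc_subset_Ici_self) hSt hs
  have hR'_neg : ∀ s ∈ Icc 0 t, deriv Rxy s < 0 := fun s hs => by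
    nlinarith [hS_neg s hs, hpos s]
  have hR'_mono : MonotoneOn (deriv Rxy) (Icc 0 t) := by
    refine monotoneOn_of_deriv_nonneg (convex_Icc 0 t) hdiff2.continuous.continuousOn
      hdiff2.differentiableOn fun s hs => ?_
    rw [interior_Icc] at hs
    have hs' : s ∈ Icc 0 t := Ioo_subset_Icc_self hs
    have hpow : oddPow (S s) q ≤ 0 :=
      nonpos_of_mul_nonneg_right (mul_oddPow_nonneg (S s) q) (hS_neg s hs')
    rw [hode s hs'.1]
    nlinarith [hR'_neg s hs']
  have h0 : deriv Rxy 0 ≤ deriv Rxy t := hR'_mono ⟨le_rfl, ht⟩ ⟨ht, le_rfl⟩ ht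
  rw [abs_of_neg (hR'_neg t ⟨ht, le_rfl⟩), abs_of_neg (hR'_neg 0 ⟨le_rfl, ht⟩)]
  have hR0 := hpos 0
  constructor <;> nlinarith

theorem reaching_phase_speed_bound_case1a
    (ka k1 : ℝ) (m n : ℤ) (hka : 0 < ka) (hk1 : 0 < k1)
    (hmodd : Odd m) (hnodd : Odd n) (hcop : IsCoprime m n)
    (hn : 0 < n) (hnm : n < m)
    (Rxy : ℝ → ℝ) (hpos : ∀ t : ℝ, 0 < Rxy t)
    (hdiff : Differentiable ℝ Rxy) (hdiff2 : Differentiable ℝ (deriv Rxy))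
    (hode : ∀ t : ℝ, 0 ≤ t →
      deriv (deriv Rxy) t
        = -ka * deriv Rxy t - k1 * oddPow (deriv Rxy t + ka * Rxy t) ((n : ℝ) / (m : ℝ)))
    (hR0 : deriv Rxy 0 < 0)
    (hS0 : deriv Rxy 0 + ka * Rxy 0 < 0)
    (hS1ode : ∀ t : ℝ, 0 ≤ t →
      deriv (fun s => deriv Rxy s + ka * Rxy s) t
        = -k1 * oddPow (deriv Rxy t + ka * Rxy t) ((n : ℝ) / (m : ℝ))) :
    ∀ t : ℝ, 0 ≤ t → deriv Rxy t + ka * Rxy t < 0 →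
      |deriv Rxy t| ≤ |deriv Rxy 0| ∧
      |deriv Rxy t| ≤ |deriv Rxy 0| + ka * Rxy 0 :=
  reaching_phase_speed_bound_case1a_general ka k1 m n hka hk1 Rxy hpos hdiff hdiff2 hode hS1ode
end

section
/- Let k_a, k_b > 0 with k_b > k_a, θ_des ∈ (-π/2, π/2), and suppose R_xy, R_z : [0,∞) → ℝ satisfy Ṙ_xy = -k_a R_xy and d/dt (R_z + tan(θ_des) R_xy) = -k_b (R_z + tan(θ_des) R_xy), with R_xy(t) > 0 for all t. Define θ(t) = arctan(-R_z(t)/R_xy(t)). Then θ satisfies θ̇ = (k_b - k_a) cos²(θ) (tan(θ_des) - tan(θ)). -/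
/-! On the sliding mode `Rxy` decays at rate `ka` and the sliding variable `Rz + tan θdes * Rxy`
at rate `kb`; the quotient rule then gives `d/dt (-Rz / Rxy) = (kb - ka) (tan θdes + Rz / Rxy)`,
and `d/dt arctan u = cos² (arctan u) * u̇` turns this into the elevation-angle dynamics. -/

open Real

theorem HasDerivAt.arctan_cos_sq_mul {u : ℝ → ℝ} {u' t : ℝ} (hu : HasDerivAt u u' t) :
    HasDerivAt (fun s => Real.arctan (u s)) (Real.cos (Real.arctan (u t)) ^ 2 * u') t := by
  simpa only [cos_sq_arctan] using hu.arctan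

theorem HasDerivAt.of_add_const_mul {x z : ℝ → ℝ} {x' σ' c t : ℝ} (hx : HasDerivAt x x' t)
    (hσ : HasDerivAt (fun s => z s + c * x s) σ' t) : HasDerivAt z (σ' - c * x') t := by
  simpa only [add_sub_cancel_right] using hσ.fun_sub (hx.const_mul c)

theorem hasDerivAt_neg_div_of_sliding_mode {x z : ℝ → ℝ} {ka kb c t : ℝ}
    (hx : HasDerivAt x (-ka * x t) t)
    (hσ : HasDerivAt (fun s => z s + c * x s) (-kb * (z t + c * x t)) t) (hxt : x t ≠ 0) :
    HasDerivAt (fun s => -z s / x s) ((kb - ka) * (c - -z t / x t)) t := by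
  refine ((hx.of_add_const_mul hσ).fun_neg.fun_div hx hxt).congr_deriv ?_
  field_simp
  ring

theorem sliding_mode_elevation_dynamics_general
    (ka kb θdes : ℝ)
    (Rxy Rz : ℝ → ℝ)
    (hdRxy : Differentiable ℝ Rxy) (hdRz : Differentiable ℝ Rz)
    (hpos : ∀ t : ℝ, 0 < Rxy t)
    (h1 : ∀ t : ℝ, 0 ≤ t → deriv Rxy t = -ka * Rxy t)
    (h2 : ∀ t : ℝ, 0 ≤ t →
      deriv (fun s => Rz s + Real.tan θdes * Rxy s) t
        = -kb * (Rz t + Real.tan θdes * Rxy t)) :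
    ∀ t : ℝ, 0 ≤ t →
      deriv (fun s => Real.arctan (-(Rz s) / Rxy s)) t
        = (kb - ka) * Real.cos (Real.arctan (-(Rz t) / Rxy t)) ^ 2
            * (Real.tan θdes - Real.tan (Real.arctan (-(Rz t) / Rxy t))) := by
  intro t ht
  have hRxy : HasDerivAt Rxy (-ka * Rxy t) t := h1 t ht ▸ (hdRxy t).hasDerivAt
  have hσ : HasDerivAt (fun s => Rz s + tan θdes * Rxy s) (-kb * (Rz t + tan θdes * Rxy t)) t :=
    h2 t ht ▸ ((hdRz t).add ((hdRxy t).const_mul _)).hasDerivAt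
  have hθ := (hasDerivAt_neg_div_of_sliding_mode hRxy hσ (hpos t).ne').arctan_cos_sq_mul
  rw [hθ.deriv, tan_arctan]
  ring

theorem sliding_mode_elevation_dynamics
    (ka kb θdes : ℝ) (hka : 0 < ka) (hkb : 0 < kb) (hab : ka < kb)
    (hθdes : θdes ∈ Set.Ioo (-(Real.pi / 2)) (Real.pi / 2))
    (Rxy Rz : ℝ → ℝ)
    (hdRxy : Differentiable ℝ Rxy) (hdRz : Differentiable ℝ Rz)
    (hpos : ∀ t : ℝ, 0 < Rxy t)
    (h1 : ∀ t : ℝ, 0 ≤ t → deriv Rxy t = -ka * Rxy t)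
    (h2 : ∀ t : ℝ, 0 ≤ t →
      deriv (fun s => Rz s + Real.tan θdes * Rxy s) t
        = -kb * (Rz t + Real.tan θdes * Rxy t)) :
    ∀ t : ℝ, 0 ≤ t →
      deriv (fun s => Real.arctan (-(Rz s) / Rxy s)) t
        = (kb - ka) * Real.cos (Real.arctan (-(Rz t) / Rxy t)) ^ 2
            * (Real.tan θdes - Real.tan (Real.arctan (-(Rz t) / Rxy t))) :=
  sliding_mode_elevation_dynamics_general ka kb θdes Rxy Rz hdRxy hdRz hpos h1 h2
end
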